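/- Let J_k denote Bessel functions of the first kind, I ⊂ ℤ finite, d_k ∈ ℂ for k ∈ I with d_{k_min} ≠ 0 where k_min = min{k ∈ I : d_k ≠ 0}, and define F_ℓ(r) = Σ_{k∈I} d_k J_{k+ℓ}(r). Then there exists j₀ > 0 (independent of ℓ) such that for all ℓ ≥ −k_min and all r with 0 < |r| < j₀, |F_ℓ(r)| ≥ (|d_{k_min}|/2) |J_{k_min+ℓ}(r)| > 0; in particular F_ℓ(r) ≠ 0. The proof uses the bounds |J_m(r)| ≤ (1/m!)(|r|/2)^m and, for |r| ≤ 1, |J_m(r)| ≥ |r|^m J_m(1) ≥ (|r|^m/(m! 2^m))(1 − 1/(2(m+1))) for m ≥ 0. -/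

import Mathlib

noncomputable def besselJ (k : ℤ) (r : ℝ) : ℝ :=
  ((1 / (2 * (Real.pi : ℂ))) * ∫ s in (0:ℝ)..(2 * Real.pi),
    Complex.exp (Complex.I * ((r * Real.sin s : ℝ) : ℂ) -
      Complex.I * (((k : ℝ) * s : ℝ) : ℂ))).re

/-!
For a nonnegative order `m` and `|r| ≤ 1`, the two classical bounds sandwich `|J_m(r)|` between
`(|r|/2)^m / (2 m!)` and `(|r|/2)^m / m!`, so every higher order is smaller by a factor `|r|`:
`|J_n(r)| ≤ |r| |J_m(r)|` for `m < n`. In `F_ℓ` the term of order `k_min + ℓ` therefore dominates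
all the others, whose total weight `|r| ∑ |d_k|` is at most `|d_{k_min}| / 2` once `|r|` is small
enough, uniformly in `ℓ`.
-/

theorem half_norm_mul_le_norm_sum_of_dominant {ι 𝕜 : Type*} [DecidableEq ι]
    [NormedDivisionRing 𝕜] {I : Finset ι} {d f : ι → 𝕜} {k₀ : ι} {ε : ℝ}
    (hk₀ : k₀ ∈ I) (hε : 0 ≤ ε) (hsmall : ε * ∑ k ∈ I, ‖d k‖ ≤ ‖d k₀‖ / 2)
    (hdom : ∀ k ∈ I, k ≠ k₀ → d k ≠ 0 → ‖f k‖ ≤ ε * ‖f k₀‖) :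
    ‖d k₀‖ / 2 * ‖f k₀‖ ≤ ‖∑ k ∈ I, d k * f k‖ := by
  have hterm : ∀ k ∈ I.erase k₀, ‖d k * f k‖ ≤ ‖d k‖ * (ε * ‖f k₀‖) := by
    intro k hk
    obtain ⟨hne, hkI⟩ := Finset.mem_erase.mp hk
    rw [norm_mul]
    by_cases hdk : d k = 0
    · simp [hdk]
    · exact mul_le_mul_of_nonneg_left (hdom k hkI hne hdk) (norm_nonneg _)
  have hrest : ‖∑ k ∈ I.erase k₀, d k * f k‖ ≤ ‖d k₀‖ / 2 * ‖f k₀‖ :=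
    calc ‖∑ k ∈ I.erase k₀, d k * f k‖
        ≤ ∑ k ∈ I.erase k₀, ‖d k‖ * (ε * ‖f k₀‖) := norm_sum_le_of_le _ hterm
      _ ≤ ∑ k ∈ I, ‖d k‖ * (ε * ‖f k₀‖) :=
          Finset.sum_le_sum_of_subset_of_nonneg (Finset.erase_subset _ _)
            fun _ _ _ => by positivity
      _ = ε * (∑ k ∈ I, ‖d k‖) * ‖f k₀‖ := by rw [← Finset.sum_mul]; ring
      _ ≤ ‖d k₀‖ / 2 * ‖f k₀‖ := mul_le_mul_of_nonneg_right hsmall (norm_nonneg _)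
  have htriangle := norm_sub_norm_le (d k₀ * f k₀) (-∑ k ∈ I.erase k₀, d k * f k)
  rw [norm_neg, sub_neg_eq_add, Finset.add_sum_erase I (fun k => d k * f k) hk₀, norm_mul]
    at htriangle
  linarith

theorem one_div_factorial_mul_pow_le_of_lt {m n : ℕ} (hmn : m < n) {t : ℝ} (ht₀ : 0 ≤ t)
    (ht₁ : t ≤ 1) :
    1 / (n.factorial : ℝ) * (t / 2) ^ n ≤ t * (t ^ m / (m.factorial * 2 ^ m) * (1 / 2)) :=
  calc 1 / (n.factorial : ℝ) * (t / 2) ^ n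
      ≤ 1 / (m.factorial : ℝ) * (t / 2) ^ (m + 1) := by
        gcongr ?_ * ?_
        · gcongr
        · exact pow_le_pow_of_le_one (by positivity) (by linarith) hmn
    _ = t * (t ^ m / (m.factorial * 2 ^ m) * (1 / 2)) := by
        rw [div_pow, pow_succ]
        field_simp
        ring

section BesselBounds

variable {J : ℤ → ℝ → ℝ}
  (hub : ∀ (m : ℕ) (r : ℝ), |J (m : ℤ) r| ≤ (1 / (Nat.factorial m : ℝ)) * (|r| / 2) ^ m)
  (hlb : ∀ (m : ℕ) (r : ℝ), |r| ≤ 1 →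
    (|r| ^ m / ((Nat.factorial m : ℝ) * 2 ^ m)) * (1 - 1 / (2 * ((m : ℝ) + 1))) ≤ |J (m : ℤ) r|)
include hlb

theorem half_leading_term_le_abs {m : ℕ} {r : ℝ} (hr : |r| ≤ 1) :
    |r| ^ m / (m.factorial * 2 ^ m) * (1 / 2) ≤ |J m r| := by
  refine le_trans (mul_le_mul_of_nonneg_left ?_ (by positivity)) (hlb m r hr)
  have : (1 : ℝ) / (2 * ((m : ℝ) + 1)) ≤ 1 / 2 :=
    one_div_le_one_div_of_le (by norm_num) (by linarith [(m.cast_nonneg : (0 : ℝ) ≤ m)])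
  linarith

theorem abs_pos_of_abs_le_one {m : ℤ} (hm : 0 ≤ m) {r : ℝ} (hr₀ : 0 < |r|) (hr : |r| ≤ 1) :
    0 < |J m r| := by
  lift m to ℕ using hm
  exact lt_of_lt_of_le (by positivity) (half_leading_term_le_abs hlb hr)

include hub

theorem abs_le_abs_mul_abs_of_lt {m n : ℤ} (hm : 0 ≤ m) (hmn : m < n) {r : ℝ} (hr : |r| ≤ 1) :
    |J n r| ≤ |r| * |J m r| := by
  lift m to ℕ using hm
  lift n to ℕ using by omega
  calc |J n r| ≤ 1 / (n.factorial : ℝ) * (|r| / 2) ^ n := hub n r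
    _ ≤ |r| * (|r| ^ m / (m.factorial * 2 ^ m) * (1 / 2)) :=
        one_div_factorial_mul_pow_le_of_lt (by exact_mod_cast hmn) (abs_nonneg r) hr
    _ ≤ |r| * |J m r| :=
        mul_le_mul_of_nonneg_left (half_leading_term_le_abs hlb hr) (abs_nonneg r)

end BesselBounds

theorem stmt18 (I : Finset ℤ) (d : ℤ → ℂ) (kmin : ℤ)
    (hkmem : kmin ∈ I) (hdk : d kmin ≠ 0)
    (hmin : ∀ k ∈ I, d k ≠ 0 → kmin ≤ k)
    (hub : ∀ (m : ℕ) (r : ℝ),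
      |besselJ (m : ℤ) r| ≤ (1 / (Nat.factorial m : ℝ)) * (|r| / 2) ^ m)
    (hlb : ∀ (m : ℕ) (r : ℝ), |r| ≤ 1 →
      (|r| ^ m / ((Nat.factorial m : ℝ) * 2 ^ m)) * (1 - 1 / (2 * ((m : ℝ) + 1))) ≤
        |besselJ (m : ℤ) r|) :
    ∃ j₀ > (0:ℝ), ∀ ℓ : ℤ, -kmin ≤ ℓ → ∀ r : ℝ, 0 < |r| → |r| < j₀ →
      (‖d kmin‖ / 2) * |besselJ (kmin + ℓ) r| ≤
        ‖∑ k ∈ I, d k * ((besselJ (k + ℓ) r : ℝ) : ℂ)‖ ∧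
      0 < (‖d kmin‖ / 2) * |besselJ (kmin + ℓ) r| := by
  set S := ∑ k ∈ I, ‖d k‖
  have hS : 0 ≤ S := Finset.sum_nonneg fun _ _ => norm_nonneg _
  have hd : 0 < ‖d kmin‖ := norm_pos_iff.mpr hdk
  refine ⟨min 1 (‖d kmin‖ / (2 * (S + 1))), by positivity, fun ℓ hℓ r hr₀ hrj => ?_⟩
  have hr₁ : |r| ≤ 1 := (hrj.trans_le (min_le_left _ _)).le
  have hrS : |r| * S ≤ ‖d kmin‖ / 2 := by
    have := (lt_div_iff₀ (by positivity)).mp (hrj.trans_le (min_le_right _ _))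
    nlinarith [abs_nonneg r]
  have hdom : ∀ k ∈ I, k ≠ kmin → d k ≠ 0 →
      ‖((besselJ (k + ℓ) r : ℝ) : ℂ)‖ ≤ |r| * ‖((besselJ (kmin + ℓ) r : ℝ) : ℂ)‖ := by
    intro k hk hne hdk'
    simp only [Complex.norm_real, Real.norm_eq_abs]
    exact abs_le_abs_mul_abs_of_lt hub hlb (by omega)
      (by have := hmin k hk hdk'; omega) hr₁
  have hsum := half_norm_mul_le_norm_sum_of_dominant hkmem (abs_nonneg r) hrS hdom
  rw [Complex.norm_real, Real.norm_eq_abs] at hsum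
  exact ⟨hsum, mul_pos (by positivity) (abs_pos_of_abs_le_one hlb (by omega) hr₀ hr₁)⟩
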